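/- Let q ≥ 1 be an integer, let a ∈ ℝ, and let δ be a real number with 0 < δ < 1/q. Then lim_{M→∞} ∫_{0}^{δ} e^{2πiax} · sin((2M+1)πqx) / sin(πqx) dx = 1/(2q). -/

import Mathlib

/-!
Since `sin ((2M+1) t) / sin t = 1 + 2 ∑_{m=1}^{M} cos (2 m t)`, the kernel integrates to exactly
`1/(2q)` over `[0, 1/(2q)]`, where every cosine runs through whole half-periods. The rest of the
integral is `∫ sin ((2M+1)πqx) h(x) dx` for two integrable functions `h`:
`(e^{2πiax} - 1) / sin (πqx)` on `[0, δ]`, bounded because the numerator also vanishes at `0`, and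
`1 / sin (πqx)` between `1/(2q)` and `δ`, continuous there because `δ < 1/q`. Both terms tend to
`0` by the Riemann–Lebesgue lemma.
-/

open Real Filter Topology MeasureTheory FourierTransform
open scoped Interval

noncomputable def dirichletKernel (M : ℕ) (t : ℝ) : ℝ :=
  1 + 2 * ∑ m ∈ Finset.range M, cos ((m + 1) * t)

@[fun_prop]
theorem continuous_dirichletKernel (M : ℕ) : Continuous (dirichletKernel M) := by
  unfold dirichletKernel; fun_prop

theorem sin_mul_dirichletKernel_two_mul (M : ℕ) (t : ℝ) :
    sin t * dirichletKernel M (2 * t) = sin ((2 * M + 1) * t) := by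
  induction M with
  | zero => simp [dirichletKernel]
  | succ M ih =>
    have h := two_mul_sin_mul_cos t ((M + 1) * (2 * t))
    rw [show t - (M + 1) * (2 * t) = -((2 * M + 1) * t) by ring, sin_neg,
      show t + (M + 1) * (2 * t) = (2 * (M + 1) + 1) * t by ring] at h
    rw [dirichletKernel, Finset.sum_range_succ] at *
    push_cast
    linear_combination ih + h

theorem sin_two_mul_add_one_mul_div_sin {t : ℝ} (ht : sin t ≠ 0) (M : ℕ) :
    sin ((2 * M + 1) * t) / sin t = dirichletKernel M (2 * t) := by
  rw [← sin_mul_dirichletKernel_two_mul, mul_div_cancel_left₀ _ ht]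

theorem integral_cos_nat_succ_mul_eq_zero (m : ℕ) :
    ∫ t in (0:ℝ)..π, cos ((m + 1) * t) = 0 := by
  rw [intervalIntegral.integral_comp_mul_left (fun t => cos t) (by positivity), integral_cos,
    mul_zero, sin_zero, sub_zero, show ((m : ℝ) + 1) * π = ((m + 1 : ℕ) : ℝ) * π by push_cast; ring,
    sin_nat_mul_pi, smul_zero]

theorem integral_dirichletKernel (M : ℕ) : ∫ t in (0:ℝ)..π, dirichletKernel M t = π := by
  have hcos (m : ℕ) : IntervalIntegrable (fun t => cos ((m + 1) * t)) volume 0 π :=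
    (by fun_prop : Continuous fun t => cos ((m + 1) * t)).intervalIntegrable _ _
  have hsum : Continuous fun t => 2 * ∑ m ∈ Finset.range M, cos ((m + 1) * t) := by fun_prop
  unfold dirichletKernel
  rw [intervalIntegral.integral_add intervalIntegrable_const (hsum.intervalIntegrable _ _),
    intervalIntegral.integral_const_mul, intervalIntegral.integral_finsetSum fun m _ => hcos m]
  simp [integral_cos_nat_succ_mul_eq_zero]

section RiemannLebesgue

variable {E : Type*} [NormedAddCommGroup E] [NormedSpace ℂ E]

theorem integral_sin_mul_smul_eq_fourier {f : ℝ → E} (hf : Integrable f) (t : ℝ) :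
    ∫ x, sin (t * x) • f x
      = (2 * Complex.I)⁻¹ • (𝓕 f (-(2 * π)⁻¹ * t) - 𝓕 f ((2 * π)⁻¹ * t)) := by
  have hexp (w : ℝ) : Integrable fun x : ℝ => Complex.exp (↑(-2 * π * x * w) * Complex.I) • f x :=
    hf.bdd_smul 1 (by fun_prop) (.of_forall fun x => by rw [Complex.norm_exp_ofReal_mul_I])
  rw [fourier_real_eq_integral_exp_smul, fourier_real_eq_integral_exp_smul,
    ← integral_sub (hexp _) (hexp _), ← integral_smul]
  congr 1 with x
  rw [← Complex.coe_smul, ← sub_smul, smul_smul]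
  congr 1
  have hπ : (π : ℂ) ≠ 0 := by exact_mod_cast pi_ne_zero
  rw [Complex.ofReal_sin, Complex.sin]
  push_cast
  field_simp
  linear_combination (Complex.exp (-(t * x * Complex.I)) - Complex.exp (t * x * Complex.I)) *
    Complex.I_sq

theorem tendsto_integral_sin_mul_smul_cocompact {f : ℝ → E} (hf : Integrable f) :
    Tendsto (fun t : ℝ => ∫ x, sin (t * x) • f x) (cocompact ℝ) (𝓝 0) := by
  have hF {c : ℝ} (hc : c ≠ 0) : Tendsto (fun t => 𝓕 f (c * t)) (cocompact ℝ) (𝓝 0) :=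
    (zero_at_infty_fourier f).comp (tendsto_cocompact_mul_left₀ hc)
  have h2π : (2 * π)⁻¹ ≠ 0 := by positivity
  simpa [integral_sin_mul_smul_eq_fourier hf] using
    ((hF (neg_ne_zero.2 h2π)).sub (hF h2π)).const_smul (2 * Complex.I)⁻¹

theorem tendsto_intervalIntegral_sin_mul_smul_cocompact {f : ℝ → E} {a b : ℝ}
    (hf : IntervalIntegrable f volume a b) :
    Tendsto (fun t : ℝ => ∫ x in a..b, sin (t * x) • f x) (cocompact ℝ) (𝓝 0) := by
  have hind : Integrable ((Ι a b).indicator f) := hf.def'.integrable_indicator measurableSet_uIoc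
  simp_rw [intervalIntegral.intervalIntegral_eq_integral_uIoc,
    ← integral_indicator measurableSet_uIoc, Set.indicator_smul]
  simpa using (tendsto_integral_sin_mul_smul_cocompact hind).const_smul
    (if a ≤ b then (1 : ℝ) else -1)

end RiemannLebesgue

theorem mul_sin_le_sin_mul {s T : ℝ} (hs : 0 ≤ s) (hs' : s ≤ 1) (hT : 0 ≤ T) (hT' : T ≤ π) :
    s * sin T ≤ sin (s * T) := by
  simpa using strictConcaveOn_sin_Icc.concaveOn.2 ⟨le_rfl, pi_pos.le⟩ ⟨hT, hT'⟩
    (sub_nonneg.2 hs') hs (by ring)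

theorem sin_mul_pos_of_mem_Ioc {c δ x : ℝ} (hc : 0 < c) (hcδ : c * δ < π)
    (hx : x ∈ Set.Ioc 0 δ) : 0 < sin (c * x) :=
  sin_pos_of_pos_of_lt_pi (mul_pos hc hx.1) ((mul_le_mul_of_nonneg_left hx.2 hc.le).trans_lt hcδ)

theorem sin_mul_pos_of_mem_uIcc {c δ x : ℝ} (hc : 0 < c) (hδ : 0 < δ) (hcδ : c * δ < π)
    (hx : x ∈ [[π / (2 * c), δ]]) : 0 < sin (c * x) := by
  have hx0 : 0 < x := (lt_min (by positivity) hδ).trans_le hx.1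
  have hxπ : x < π / c := hx.2.trans_lt
    (max_lt (div_lt_div_of_pos_left pi_pos hc (by linarith)) (by rwa [lt_div_iff₀' hc]))
  exact sin_pos_of_pos_of_lt_pi (mul_pos hc hx0) (by rwa [lt_div_iff₀' hc] at hxπ)

theorem intervalIntegrable_exp_mul_I_sub_one_div_sin {c δ : ℝ} (hc : 0 < c) (hδ : 0 < δ)
    (hcδ : c * δ < π) (ω : ℝ) :
    IntervalIntegrable (fun x : ℝ => (Complex.exp (ω * x * Complex.I) - 1) / sin (c * x))
      volume 0 δ := by
  rw [intervalIntegrable_iff_integrableOn_Ioc_of_le hδ.le]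
  refine Measure.integrableOn_of_bounded (M := |ω| * δ / sin (c * δ)) measure_Ioc_lt_top.ne
    (Measurable.aestronglyMeasurable (by fun_prop))
    ((ae_restrict_mem measurableSet_Ioc).mono fun x hx => ?_)
  have hx0 : 0 < x := hx.1
  have hsinδ := sin_mul_pos_of_mem_Ioc hc hcδ ⟨hδ, le_rfl⟩
  have hsinx := sin_mul_pos_of_mem_Ioc hc hcδ hx
  have hlower : x / δ * sin (c * δ) ≤ sin (c * x) := by
    have := mul_sin_le_sin_mul (div_nonneg hx0.le hδ.le) ((div_le_one hδ).2 hx.2)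
      (mul_pos hc hδ).le hcδ.le
    rwa [show x / δ * (c * δ) = c * x by field_simp] at this
  have hnum : ‖Complex.exp (ω * x * Complex.I) - 1‖ ≤ |ω| * x := by
    simpa [mul_comm, abs_mul, abs_of_pos hx0] using norm_exp_I_mul_ofReal_sub_one_le (x := ω * x)
  rw [norm_div, Complex.norm_real, norm_of_nonneg hsinx.le]
  calc _ ≤ |ω| * x / (x / δ * sin (c * δ)) :=
        div_le_div₀ (by positivity) hnum (by positivity) hlower
    _ = |ω| * δ / sin (c * δ) := by field_simp

theorem integral_exp_mul_sin_div_sin_eq {c δ : ℝ} (hc : 0 < c) (hδ : 0 < δ) (hcδ : c * δ < π)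
    (ω : ℝ) (M : ℕ) :
    ∫ x in (0:ℝ)..δ,
        Complex.exp (ω * x * Complex.I) * (sin ((2 * M + 1) * c * x) / sin (c * x) : ℝ)
      = (∫ x in (0:ℝ)..δ,
          sin ((2 * M + 1) * c * x) • ((Complex.exp (ω * x * Complex.I) - 1) / sin (c * x)))
        + ∫ x in (0:ℝ)..δ, (dirichletKernel M (2 * c * x) : ℂ) := by
  rw [← intervalIntegral.integral_add
    ((intervalIntegrable_exp_mul_I_sub_one_div_sin hc hδ hcδ ω).continuousOn_smul (by fun_prop))
    ((by fun_prop : Continuous fun x => (dirichletKernel M (2 * c * x) : ℂ)).intervalIntegrable _ _)]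
  refine intervalIntegral.integral_congr_ae (.of_forall fun x hx => ?_)
  rw [Set.uIoc_of_le hδ.le] at hx
  have hsin := (sin_mul_pos_of_mem_Ioc hc hcδ hx).ne'
  have hsinC : (sin (c * x) : ℂ) ≠ 0 := by exact_mod_cast hsin
  rw [mul_assoc 2 c, ← sin_two_mul_add_one_mul_div_sin hsin, mul_assoc _ c x, Complex.real_smul]
  push_cast
  field_simp
  ring

theorem integral_ofReal_dirichletKernel_two_mul {c δ : ℝ} (hc : 0 < c) (hδ : 0 < δ)
    (hcδ : c * δ < π) (M : ℕ) :
    ∫ x in (0:ℝ)..δ, (dirichletKernel M (2 * c * x) : ℂ)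
      = π / (2 * c) + ∫ x in π / (2 * c)..δ, sin ((2 * M + 1) * c * x) • (sin (c * x) : ℂ)⁻¹ := by
  have hD (a b : ℝ) : IntervalIntegrable (fun x => (dirichletKernel M (2 * c * x) : ℂ)) volume a b :=
    (by fun_prop : Continuous fun x => (dirichletKernel M (2 * c * x) : ℂ)).intervalIntegrable _ _
  rw [← intervalIntegral.integral_add_adjacent_intervals (hD 0 (π / (2 * c))) (hD _ δ)]
  congr 1
  · rw [intervalIntegral.integral_ofReal, intervalIntegral.integral_comp_mul_left _ (by positivity),
      mul_zero, mul_div_cancel₀ _ (by positivity), integral_dirichletKernel, smul_eq_mul]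
    push_cast
    ring
  · refine intervalIntegral.integral_congr fun x hx => ?_
    have hsin := (sin_mul_pos_of_mem_uIcc hc hδ hcδ hx).ne'
    rw [mul_assoc 2 c, ← sin_two_mul_add_one_mul_div_sin hsin, mul_assoc _ c x, Complex.real_smul]
    push_cast
    rfl

theorem tendsto_integral_exp_mul_sin_div_sin {c δ : ℝ} (hc : 0 < c) (hδ : 0 < δ)
    (hcδ : c * δ < π) (ω : ℝ) :
    Tendsto (fun M : ℕ => ∫ x in (0:ℝ)..δ,
        Complex.exp (ω * x * Complex.I) * (sin ((2 * M + 1) * c * x) / sin (c * x) : ℝ))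
      atTop (𝓝 (π / (2 * c))) := by
  have hfreq : Tendsto (fun M : ℕ => (2 * M + 1) * c) atTop (cocompact ℝ) :=
    (tendsto_natCast_atTop_atTop.const_mul_atTop two_pos |>.atTop_add tendsto_const_nhds
      |>.atTop_mul_const hc).mono_right atTop_le_cocompact
  have hnear := (tendsto_intervalIntegral_sin_mul_smul_cocompact
    (intervalIntegrable_exp_mul_I_sub_one_div_sin hc hδ hcδ ω)).comp hfreq
  have hinv : IntervalIntegrable (fun x => (sin (c * x) : ℂ)⁻¹) volume (π / (2 * c)) δ :=
    (ContinuousOn.inv₀ (by fun_prop) fun x hx => by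
      exact_mod_cast (sin_mul_pos_of_mem_uIcc hc hδ hcδ hx).ne').intervalIntegrable
  have hfar := (tendsto_intervalIntegral_sin_mul_smul_cocompact hinv).comp hfreq
  simp_rw [integral_exp_mul_sin_div_sin_eq hc hδ hcδ,
    integral_ofReal_dirichletKernel_two_mul hc hδ hcδ]
  simpa using hnear.add (hfar.const_add _)

/-- The half-mass endpoint computation in the proof of the paper's Theorem 3: for an
integer `q ≥ 1` and `0 < δ < 1/q`,
`lim_{M→∞} ∫_{0}^{δ} e^{2πiax} sin((2M+1)πqx)/sin(πqx) dx = 1/(2q)`. -/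
theorem dirichlet_kernel_half_mass (q : ℕ) (hq : 1 ≤ q)
    (a : ℝ) (δ : ℝ) (hδ0 : 0 < δ) (hδ1 : δ < 1 / q) :
    Filter.Tendsto (fun M : ℕ =>
        ∫ x in (0 : ℝ)..δ,
          Complex.exp (2 * Real.pi * Complex.I * a * x) *
            ((Real.sin ((2 * M + 1) * Real.pi * q * x) / Real.sin (Real.pi * q * x) : ℝ) : ℂ))
      Filter.atTop
      (nhds (1 / (2 * (q : ℂ)))) := by
  have hq0 : (0 : ℝ) < q := by exact_mod_cast hq
  have hcδ : π * q * δ < π := by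
    rw [mul_assoc]
    exact mul_lt_of_lt_one_right pi_pos (by rwa [lt_div_iff₀' hq0] at hδ1)
  have hπ : (π : ℂ) ≠ 0 := by exact_mod_cast pi_ne_zero
  rw [show 1 / (2 * (q : ℂ)) = π / (2 * ((π * q : ℝ) : ℂ)) by push_cast; field_simp]
  convert tendsto_integral_exp_mul_sin_div_sin (mul_pos pi_pos hq0) hδ0 hcδ (2 * π * a) using 4
    with M x
  push_cast
  ring_nf
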